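/- Let f,g ∈ C^∞((−1,1)) and suppose u, ũ ∈ C^∞([0,∞)×(−1,1)) both satisfy [∂_s² + 2y ∂_s∂_y + ∂_s − (1−y²)∂_y² + 2y ∂_y] u(s,y) = 0 on (0,∞)×(−1,1) together with the initial conditions u(0,y) = f(y) and ∂_s u(s,y)|_{s=0} = g(y) for all y ∈ (−1,1). Then u = ũ on [0,∞)×(−1,1). -/

import Mathlib

open MeasureTheory Set ENNReal

/-- Partial derivative in the first (time-like) variable. -/
noncomputable def dS (u : ℝ → ℝ → ℂ) (s y : ℝ) : ℂ := deriv (fun s' => u s' y) s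

/-- Partial derivative in the second (space-like) variable. -/
noncomputable def dY (u : ℝ → ℝ → ℂ) (s y : ℝ) : ℂ := deriv (fun y' => u s y') y

/-- The hyperboloidal wave operator
`∂_s² + 2y ∂_s∂_y + ∂_s − (1−y²)∂_y² + 2y ∂_y`. -/
noncomputable def waveOp (u : ℝ → ℝ → ℂ) (s y : ℝ) : ℂ :=
  dS (dS u) s y + 2 * (y:ℂ) * dS (dY u) s y + dS u s y
    - (1 - (y:ℂ)^2) * dY (dY u) s y + 2 * (y:ℂ) * dY u s y

/-!
The operator factors as `(X₁ + 1) X₋₁`, where `X_c = ∂_s + (y + c) ∂_y` is `charDeriv c`; this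
uses the symmetry of second derivatives. For the difference `W` of two solutions, `F = X₋₁ W`
satisfies `X₁ F = -F` and vanishes on `s = 0` because the Cauchy data of `W` vanish. Followed
back to `s = 0`, the integral curves of `X_c` (`|c| ≤ 1`) through points of `(0,∞) × (-1,1)` stay
in the strip; `e^s F` is constant along those of `X₁`, so `F = 0`, and then `W` is constant along
those of `X₋₁`, so `W = 0`.
-/

open Filter Topology Function

section

variable {E : Type*} [NormedAddCommGroup E] [NormedSpace ℝ E]

noncomputable def charDeriv (c : ℝ) (w : ℝ × ℝ → E) (p : ℝ × ℝ) : E :=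
  fderiv ℝ w p (1, p.2 + c)

lemma charDeriv_congr {c : ℝ} {w w' : ℝ × ℝ → E} {p : ℝ × ℝ} (h : w =ᶠ[𝓝 p] w') :
    charDeriv c w p = charDeriv c w' p := by
  rw [charDeriv, charDeriv, h.fderiv_eq]

lemma charDeriv_sub {c : ℝ} {w w' : ℝ × ℝ → E} {p : ℝ × ℝ} (hw : DifferentiableAt ℝ w p)
    (hw' : DifferentiableAt ℝ w' p) :
    charDeriv c (w - w') p = charDeriv c w p - charDeriv c w' p := by
  rw [charDeriv, fderiv_sub hw hw']
  rfl

lemma ContDiffAt.differentiableAt_fderiv {V : Type*} [NormedAddCommGroup V] [NormedSpace ℝ V]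
    {w : V → E} {p : V} (hw : ContDiffAt ℝ 2 w p) : DifferentiableAt ℝ (fderiv ℝ w) p :=
  (hw.fderiv_right (m := 1) le_rfl).differentiableAt one_ne_zero

lemma hasFDerivAt_charVector (c : ℝ) (p : ℝ × ℝ) :
    HasFDerivAt (fun r : ℝ × ℝ => ((1 : ℝ), r.2 + c))
      ((0 : ℝ × ℝ →L[ℝ] ℝ).prod (ContinuousLinearMap.snd ℝ ℝ ℝ)) p :=
  (hasFDerivAt_const 1 p).prodMk (hasFDerivAt_snd.add_const c)

lemma differentiableAt_charDeriv {c : ℝ} {w : ℝ × ℝ → E} {p : ℝ × ℝ}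
    (hw : ContDiffAt ℝ 2 w p) : DifferentiableAt ℝ (charDeriv c w) p :=
  hw.differentiableAt_fderiv.clm_apply (hasFDerivAt_charVector c p).differentiableAt

lemma charDeriv_charDeriv {c c' : ℝ} {w : ℝ × ℝ → E} {p : ℝ × ℝ} (hw : ContDiffAt ℝ 2 w p) :
    charDeriv c' (charDeriv c w) p =
      fderiv ℝ (fderiv ℝ w) p (1, p.2 + c') (1, p.2 + c) + fderiv ℝ w p (0, p.2 + c') := by
  unfold charDeriv
  rw [fderiv_clm_apply hw.differentiableAt_fderiv
    (hasFDerivAt_charVector c p).differentiableAt, (hasFDerivAt_charVector c p).fderiv]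
  simp [add_comm]

lemma dS_eq_fderiv {u : ℝ → ℝ → ℂ} {s y : ℝ} (h : DifferentiableAt ℝ (uncurry u) (s, y)) :
    dS u s y = fderiv ℝ (uncurry u) (s, y) (1, 0) := by
  have := h.hasFDerivAt.comp_hasDerivAt s ((hasDerivAt_id s).prodMk (hasDerivAt_const s y))
  exact this.deriv

lemma dY_eq_fderiv {u : ℝ → ℝ → ℂ} {s y : ℝ} (h : DifferentiableAt ℝ (uncurry u) (s, y)) :
    dY u s y = fderiv ℝ (uncurry u) (s, y) (0, 1) := by
  have := h.hasFDerivAt.comp_hasDerivAt y ((hasDerivAt_const y s).prodMk (hasDerivAt_id y))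
  exact this.deriv

lemma dS_congr {u v : ℝ → ℝ → ℂ} {s y : ℝ} (h : uncurry u =ᶠ[𝓝 (s, y)] uncurry v) :
    dS u s y = dS v s y :=
  Filter.EventuallyEq.deriv_eq (((continuous_id.prodMk continuous_const).tendsto s).eventually h)

lemma dY_congr {u v : ℝ → ℝ → ℂ} {s y : ℝ} (h : uncurry u =ᶠ[𝓝 (s, y)] uncurry v) :
    dY u s y = dY v s y :=
  Filter.EventuallyEq.deriv_eq (((continuous_const.prodMk continuous_id).tendsto y).eventually h)

theorem waveOp_eq_fderiv {u : ℝ → ℝ → ℂ} {s y : ℝ} (hu : ContDiffAt ℝ 2 (uncurry u) (s, y)) :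
    waveOp u s y =
      fderiv ℝ (fderiv ℝ (uncurry u)) (s, y) (1, 0) (1, 0)
        + 2 * y * fderiv ℝ (fderiv ℝ (uncurry u)) (s, y) (1, 0) (0, 1)
        + fderiv ℝ (uncurry u) (s, y) (1, 0)
        - (1 - y ^ 2) * fderiv ℝ (fderiv ℝ (uncurry u)) (s, y) (0, 1) (0, 1)
        + 2 * y * fderiv ℝ (uncurry u) (s, y) (0, 1) := by
  have hd : ∀ᶠ r in 𝓝 (s, y), DifferentiableAt ℝ (uncurry u) r :=
    (hu.eventually (by simp)).mono fun r hr => hr.differentiableAt (by simp)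
  have hd2 : DifferentiableAt ℝ (fderiv ℝ (uncurry u)) (s, y) := hu.differentiableAt_fderiv
  set D : ℝ → ℝ → ℝ × ℝ → ℂ := fun a b => fderiv ℝ (uncurry u) (a, b)
  have hdS : uncurry (dS u) =ᶠ[𝓝 (s, y)] uncurry fun a b => D a b (1, 0) :=
    hd.mono fun r hr => dS_eq_fderiv hr
  have hdY : uncurry (dY u) =ᶠ[𝓝 (s, y)] uncurry fun a b => D a b (0, 1) :=
    hd.mono fun r hr => dY_eq_fderiv hr
  have hde (e : ℝ × ℝ) : DifferentiableAt ℝ (uncurry fun a b => D a b e) (s, y) :=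
    hd2.clm_apply (differentiableAt_const e)
  have hpartial (e v : ℝ × ℝ) :
      fderiv ℝ (uncurry fun a b => D a b e) (s, y) v
        = fderiv ℝ (fderiv ℝ (uncurry u)) (s, y) v e := by
    change fderiv ℝ (fun r => fderiv ℝ (uncurry u) r e) (s, y) v = _
    rw [fderiv_clm_apply hd2 (differentiableAt_const e)]
    simp
  rw [waveOp, dS_congr hdS, dS_congr hdY, dY_congr hdY, dS_eq_fderiv (hde _),
    dS_eq_fderiv (hde _), dY_eq_fderiv (hde _), hpartial, hpartial, hpartial,
    dS_eq_fderiv hd.self_of_nhds, dY_eq_fderiv hd.self_of_nhds]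

theorem waveOp_eq_charDeriv_charDeriv {u : ℝ → ℝ → ℂ} {s y : ℝ}
    (hu : ContDiffAt ℝ 2 (uncurry u) (s, y)) :
    waveOp u s y = charDeriv 1 (charDeriv (-1) (uncurry u)) (s, y)
      + charDeriv (-1) (uncurry u) (s, y) := by
  have hsym := hu.isSymmSndFDerivAt (by simp [minSmoothness_of_isRCLikeNormedField]) (1, 0) (0, 1)
  have e1 : ((1 : ℝ), y + 1) = ((1 : ℝ), (0 : ℝ)) + (y + 1) • ((0 : ℝ), (1 : ℝ)) := by simp
  have e2 : ((1 : ℝ), y + -1) = ((1 : ℝ), (0 : ℝ)) + (y - 1) • ((0 : ℝ), (1 : ℝ)) := by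
    simp [sub_eq_add_neg]
  have e3 : ((0 : ℝ), y + 1) = (y + 1) • ((0 : ℝ), (1 : ℝ)) := by simp
  rw [waveOp_eq_fderiv hu, charDeriv_charDeriv hu, charDeriv]
  dsimp only
  rw [e1, e2, e3]
  simp only [map_add, map_smul, add_apply, smul_apply, Complex.real_smul, hsym]
  push_cast
  ring

theorem waveOp_sub {u v : ℝ → ℝ → ℂ} {s y : ℝ} (hu : ContDiffAt ℝ 2 (uncurry u) (s, y))
    (hv : ContDiffAt ℝ 2 (uncurry v) (s, y)) :
    waveOp (fun a b => u a b - v a b) s y = waveOp u s y - waveOp v s y := by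
  have hd : ∀ᶠ r in 𝓝 (s, y),
      DifferentiableAt ℝ (uncurry u) r ∧ DifferentiableAt ℝ (uncurry v) r :=
    ((hu.eventually (by simp)).and (hv.eventually (by simp))).mono fun r hr =>
      ⟨hr.1.differentiableAt (by simp), hr.2.differentiableAt (by simp)⟩
  have hY : charDeriv (-1) (uncurry u - uncurry v)
      =ᶠ[𝓝 (s, y)] charDeriv (-1) (uncurry u) - charDeriv (-1) (uncurry v) :=
    hd.mono fun r hr => charDeriv_sub hr.1 hr.2
  rw [waveOp_eq_charDeriv_charDeriv (u := fun a b => u a b - v a b) (hu.sub hv),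
    waveOp_eq_charDeriv_charDeriv hu, waveOp_eq_charDeriv_charDeriv hv]
  change charDeriv 1 (charDeriv (-1) (uncurry u - uncurry v)) (s, y)
    + charDeriv (-1) (uncurry u - uncurry v) (s, y) = _
  rw [charDeriv_congr hY,
    charDeriv_sub (differentiableAt_charDeriv hu) (differentiableAt_charDeriv hv),
    charDeriv_sub hd.self_of_nhds.1 hd.self_of_nhds.2]
  ring

theorem eq_zero_of_hasDerivAt_eq_smul [CompleteSpace E] {φ : ℝ → E} {k a b : ℝ} (hab : a ≤ b)
    (hcont : ContinuousOn φ (Icc a b)) (hderiv : ∀ t ∈ Ioo a b, HasDerivAt φ (k • φ t) t)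
    (ha : φ a = 0) : φ b = 0 := by
  have hχ : ∀ t ∈ Ioo a b, HasDerivAt (fun t => Real.exp (-k * t) • φ t) 0 t := by
    intro t ht
    refine (((hasDerivAt_id t).const_mul (-k)).exp.smul (hderiv t ht)).congr_deriv ?_
    rw [smul_smul, ← add_smul]
    ring_nf
    exact zero_smul ℝ _
  have hFTC := intervalIntegral.integral_eq_sub_of_hasDerivAt_of_le hab
    ((Real.continuous_exp.comp (continuous_const.mul continuous_id)).continuousOn.smul hcont) hχ
    intervalIntegrable_const
  simpa [ha, Real.exp_ne_zero, eq_comm (a := (0 : E))] using hFTC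

/-- The integral curve `t ↦ (t, charCurve c a b t)` of `∂_s + (y + c) ∂_y` through `(a, b)`. -/
noncomputable def charCurve (c a b t : ℝ) : ℝ := (b + c) * Real.exp (t - a) - c

lemma hasDerivAt_charCurve (c a b t : ℝ) :
    HasDerivAt (charCurve c a b) (charCurve c a b t + c) t := by
  refine ((((hasDerivAt_id t).sub_const a).exp.const_mul (b + c)).sub_const c).congr_deriv ?_
  simp [charCurve]

lemma charCurve_self (c a b : ℝ) : charCurve c a b a = b := by
  simp [charCurve]

lemma charCurve_mem_Ioo {c a b t : ℝ} (hc : |c| ≤ 1) (hb : b ∈ Ioo (-1 : ℝ) 1) (ht : t ≤ a) :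
    charCurve c a b t ∈ Ioo (-1 : ℝ) 1 := by
  obtain ⟨hc₁, hc₂⟩ := abs_le.mp hc
  have he₀ : 0 < Real.exp (t - a) := Real.exp_pos _
  have he₁ : Real.exp (t - a) ≤ 1 := Real.exp_le_one_iff.mpr (by linarith)
  constructor <;> simp only [charCurve]
  · nlinarith [mul_pos he₀ (show 0 < b + 1 by linarith [hb.1]),
      mul_nonneg (sub_nonneg.2 he₁) (show 0 ≤ 1 - c by linarith)]
  · nlinarith [mul_pos he₀ (show 0 < 1 - b by linarith [hb.2]),
      mul_nonneg (sub_nonneg.2 he₁) (show 0 ≤ 1 + c by linarith)]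

theorem eq_zero_of_charDeriv_eq_smul [CompleteSpace E] {φ : ℝ × ℝ → E} {c k : ℝ} (hc : |c| ≤ 1)
    (hcont : ContinuousOn φ (Ici (0 : ℝ) ×ˢ Ioo (-1 : ℝ) 1))
    (hdiff : ∀ q ∈ Ioi (0 : ℝ) ×ˢ Ioo (-1 : ℝ) 1, DifferentiableAt ℝ φ q)
    (hchar : ∀ q ∈ Ioi (0 : ℝ) ×ˢ Ioo (-1 : ℝ) 1, charDeriv c φ q = k • φ q)
    (h0 : ∀ y ∈ Ioo (-1 : ℝ) 1, φ (0, y) = 0) :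
    ∀ q ∈ Ici (0 : ℝ) ×ˢ Ioo (-1 : ℝ) 1, φ q = 0 := by
  rintro ⟨a, b⟩ ⟨ha, hb⟩
  let γ : ℝ → ℝ × ℝ := fun t => (t, charCurve c a b t)
  have hγ (t : ℝ) : HasDerivAt γ (1, charCurve c a b t + c) t :=
    (hasDerivAt_id t).prodMk (hasDerivAt_charCurve c a b t)
  have hγcont : ContinuousOn (φ ∘ γ) (Icc 0 a) :=
    hcont.comp (continuous_iff_continuousAt.2 fun t => (hγ t).continuousAt).continuousOn
      fun t ht => ⟨ht.1, charCurve_mem_Ioo hc hb ht.2⟩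
  have hγderiv : ∀ t ∈ Ioo 0 a, HasDerivAt (φ ∘ γ) (k • (φ ∘ γ) t) t := by
    intro t ht
    have hq : γ t ∈ Ioi (0 : ℝ) ×ˢ Ioo (-1 : ℝ) 1 := ⟨ht.1, charCurve_mem_Ioo hc hb ht.2.le⟩
    rw [comp_apply, ← hchar _ hq]
    exact (hdiff _ hq).hasFDerivAt.comp_hasDerivAt t (hγ t)
  have := eq_zero_of_hasDerivAt_eq_smul ha hγcont hγderiv (h0 _ (charCurve_mem_Ioo hc hb ha))
  simpa [γ, charCurve_self] using this

theorem fderivWithin_eq_zero_of_cauchyData_eq_zero {W : ℝ × ℝ → E} {y : ℝ}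
    (hy : y ∈ Ioo (-1 : ℝ) 1)
    (hW : DifferentiableWithinAt ℝ W (Ici (0 : ℝ) ×ˢ Ioo (-1 : ℝ) 1) (0, y))
    (h0 : ∀ y ∈ Ioo (-1 : ℝ) 1, W (0, y) = 0)
    (h1 : derivWithin (fun s => W (s, y)) (Ici 0) 0 = 0) :
    fderivWithin ℝ W (Ici (0 : ℝ) ×ˢ Ioo (-1 : ℝ) 1) (0, y) = 0 := by
  set L := fderivWithin ℝ W (Ici (0 : ℝ) ×ˢ Ioo (-1 : ℝ) 1) (0, y)
  have hs : HasDerivWithinAt (fun s => W (s, y)) (L (1, 0)) (Ici 0) 0 :=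
    hW.hasFDerivWithinAt.comp_hasDerivWithinAt 0
      ((hasDerivAt_id _).prodMk (hasDerivAt_const _ y)).hasDerivWithinAt
      fun s hs => mk_mem_prod hs hy
  have hy' : HasDerivWithinAt (fun y' => W (0, y')) (L (0, 1)) (Ioo (-1) 1) y :=
    hW.hasFDerivWithinAt.comp_hasDerivWithinAt y
      ((hasDerivAt_const _ 0).prodMk (hasDerivAt_id _)).hasDerivWithinAt
      fun y' hy' => mk_mem_prod self_mem_Ici hy'
  have hL₁ : L (1, 0) = 0 := by
    rw [← hs.derivWithin (uniqueDiffOn_Ici 0 0 self_mem_Ici), h1]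
  have hL₂ : L (0, 1) = 0 :=
    (hy'.hasDerivAt (Ioo_mem_nhds hy.1 hy.2)).unique
      (((hasDerivWithinAt_const y _ 0).congr (fun y' hy' => h0 y' hy') (h0 y hy)).hasDerivAt
        (Ioo_mem_nhds hy.1 hy.2))
  exact ContinuousLinearMap.prod_ext (ContinuousLinearMap.ext_ring hL₁)
    (ContinuousLinearMap.ext_ring hL₂)

lemma Ici_prod_Ioo_mem_nhds {q : ℝ × ℝ} (hq : q ∈ Ioi (0 : ℝ) ×ˢ Ioo (-1 : ℝ) 1) :
    Ici (0 : ℝ) ×ˢ Ioo (-1 : ℝ) 1 ∈ 𝓝 q :=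
  mem_of_superset ((isOpen_Ioi.prod isOpen_Ioo).mem_nhds hq)
    (prod_mono Ioi_subset_Ici_self subset_rfl)

theorem eq_zero_of_waveOp_eq_zero {W : ℝ → ℝ → ℂ}
    (hW : ContDiffOn ℝ 2 (uncurry W) (Ici (0 : ℝ) ×ˢ Ioo (-1 : ℝ) 1))
    (hwave : ∀ s ∈ Ioi (0 : ℝ), ∀ y ∈ Ioo (-1 : ℝ) 1, waveOp W s y = 0)
    (h0 : ∀ y ∈ Ioo (-1 : ℝ) 1, W 0 y = 0)
    (h1 : ∀ y ∈ Ioo (-1 : ℝ) 1, derivWithin (fun s => W s y) (Ici 0) 0 = 0) :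
    ∀ s ∈ Ici (0 : ℝ), ∀ y ∈ Ioo (-1 : ℝ) 1, W s y = 0 := by
  have hW₂ (q : ℝ × ℝ) (hq : q ∈ Ioi (0 : ℝ) ×ˢ Ioo (-1 : ℝ) 1) : ContDiffAt ℝ 2 (uncurry W) q :=
    (hW q (mem_of_mem_nhds (Ici_prod_Ioo_mem_nhds hq))).contDiffAt (Ici_prod_Ioo_mem_nhds hq)
  -- `F` extends `charDeriv (-1) (uncurry W)` continuously to the initial line `s = 0`.
  let F : ℝ × ℝ → ℂ := fun q =>
    fderivWithin ℝ (uncurry W) (Ici (0 : ℝ) ×ˢ Ioo (-1 : ℝ) 1) q (1, q.2 + -1)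
  have hF (q : ℝ × ℝ) (hq : q ∈ Ioi (0 : ℝ) ×ˢ Ioo (-1 : ℝ) 1) :
      F =ᶠ[𝓝 q] charDeriv (-1) (uncurry W) :=
    Filter.eventually_of_mem ((isOpen_Ioi.prod isOpen_Ioo).mem_nhds hq) fun r hr => by
      simp only [F, charDeriv, fderivWithin_of_mem_nhds (Ici_prod_Ioo_mem_nhds hr)]
  have hF0 : ∀ q ∈ Ici (0 : ℝ) ×ˢ Ioo (-1 : ℝ) 1, F q = 0 := by
    refine eq_zero_of_charDeriv_eq_smul (c := 1) (k := -1) (by norm_num) ?_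
      (fun q hq => (differentiableAt_charDeriv (hW₂ q hq)).congr_of_eventuallyEq (hF q hq)) ?_ ?_
    · exact (hW.continuousOn_fderivWithin
        ((uniqueDiffOn_Ici 0).prod isOpen_Ioo.uniqueDiffOn) one_le_two).clm_apply (by fun_prop)
    · rintro ⟨s, y⟩ hq
      have hfactor := waveOp_eq_charDeriv_charDeriv (hW₂ _ hq)
      rw [hwave s hq.1 y hq.2] at hfactor
      rw [charDeriv_congr (hF _ hq), (hF _ hq).eq_of_nhds, neg_one_smul]
      linear_combination -hfactor
    · intro y hy
      simp only [F, fderivWithin_eq_zero_of_cauchyData_eq_zero hy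
        ((hW _ (mk_mem_prod self_mem_Ici hy)).differentiableWithinAt (by simp)) h0 (h1 y hy),
        zero_apply]
  intro s hs y hy
  refine eq_zero_of_charDeriv_eq_smul (c := -1) (k := 0) (by norm_num) hW.continuousOn
    (fun q hq => (hW₂ q hq).differentiableAt two_ne_zero) (fun q hq => ?_)
    h0 (s, y) ⟨hs, hy⟩
  rw [zero_smul, ← (hF q hq).eq_of_nhds, hF0 q (prod_mono Ioi_subset_Ici_self subset_rfl hq)]

end

theorem stmt3_general (f g : ℝ → ℂ)
    (u v : ℝ → ℝ → ℂ)
    (hu : ContDiffOn ℝ (⊤:ℕ∞) (fun p : ℝ × ℝ => u p.1 p.2) (Ici (0:ℝ) ×ˢ Ioo (-1:ℝ) 1))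
    (hv : ContDiffOn ℝ (⊤:ℕ∞) (fun p : ℝ × ℝ => v p.1 p.2) (Ici (0:ℝ) ×ˢ Ioo (-1:ℝ) 1))
    (hueq : ∀ s ∈ Ioi (0:ℝ), ∀ y ∈ Ioo (-1:ℝ) 1, waveOp u s y = 0)
    (hveq : ∀ s ∈ Ioi (0:ℝ), ∀ y ∈ Ioo (-1:ℝ) 1, waveOp v s y = 0)
    (hu0 : ∀ y ∈ Ioo (-1:ℝ) 1, u 0 y = f y)
    (hv0 : ∀ y ∈ Ioo (-1:ℝ) 1, v 0 y = f y)
    (hu1 : ∀ y ∈ Ioo (-1:ℝ) 1, derivWithin (fun s => u s y) (Ici (0:ℝ)) 0 = g y)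
    (hv1 : ∀ y ∈ Ioo (-1:ℝ) 1, derivWithin (fun s => v s y) (Ici (0:ℝ)) 0 = g y) :
    ∀ s ∈ Ici (0:ℝ), ∀ y ∈ Ioo (-1:ℝ) 1, u s y = v s y := by
  have hslice {w : ℝ → ℝ → ℂ}
      (hw : ContDiffOn ℝ (⊤:ℕ∞) (uncurry w) (Ici (0:ℝ) ×ˢ Ioo (-1:ℝ) 1))
      {y : ℝ} (hy : y ∈ Ioo (-1:ℝ) 1) : DifferentiableWithinAt ℝ (fun s => w s y) (Ici 0) 0 :=
    ((hw _ ⟨self_mem_Ici, hy⟩).differentiableWithinAt (by simp)).comp 0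
      (differentiableAt_id.prodMk (differentiableAt_const y)).differentiableWithinAt
      fun s hs => ⟨hs, hy⟩
  have hat {w : ℝ → ℝ → ℂ}
      (hw : ContDiffOn ℝ (⊤:ℕ∞) (uncurry w) (Ici (0:ℝ) ×ˢ Ioo (-1:ℝ) 1))
      {s y : ℝ} (hs : s ∈ Ioi (0:ℝ)) (hy : y ∈ Ioo (-1:ℝ) 1) :
      ContDiffAt ℝ 2 (uncurry w) (s, y) :=
    ((hw _ ⟨Ioi_subset_Ici_self hs, hy⟩).contDiffAt (Ici_prod_Ioo_mem_nhds ⟨hs, hy⟩)).of_le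
      (WithTop.coe_le_coe.2 le_top)
  intro s hs y hy
  have hzero := eq_zero_of_waveOp_eq_zero (W := fun a b => u a b - v a b)
    ((hu.sub hv).of_le (WithTop.coe_le_coe.2 le_top))
    (fun s hs y hy => by
      rw [waveOp_sub (hat hu hs hy) (hat hv hs hy), hueq s hs y hy, hveq s hs y hy, sub_self])
    (fun y hy => by rw [hu0 y hy, hv0 y hy, sub_self])
    (fun y hy => by
      rw [derivWithin_fun_sub (hslice hu hy) (hslice hv hy), hu1 y hy, hv1 y hy, sub_self])
    s hs y hy
  exact sub_eq_zero.mp hzero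

/-- Uniqueness (Lemma `lem:dAlembert`, uniqueness part): two smooth solutions of the
hyperboloidal free wave equation on `[0,∞)×(-1,1)` with the same initial data `(f,g)`
coincide. -/
theorem stmt3 (f g : ℝ → ℂ)
    (hf : ContDiffOn ℝ (⊤:ℕ∞) f (Ioo (-1:ℝ) 1))
    (hg : ContDiffOn ℝ (⊤:ℕ∞) g (Ioo (-1:ℝ) 1))
    (u v : ℝ → ℝ → ℂ)
    (hu : ContDiffOn ℝ (⊤:ℕ∞) (fun p : ℝ × ℝ => u p.1 p.2) (Ici (0:ℝ) ×ˢ Ioo (-1:ℝ) 1))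
    (hv : ContDiffOn ℝ (⊤:ℕ∞) (fun p : ℝ × ℝ => v p.1 p.2) (Ici (0:ℝ) ×ˢ Ioo (-1:ℝ) 1))
    (hueq : ∀ s ∈ Ioi (0:ℝ), ∀ y ∈ Ioo (-1:ℝ) 1, waveOp u s y = 0)
    (hveq : ∀ s ∈ Ioi (0:ℝ), ∀ y ∈ Ioo (-1:ℝ) 1, waveOp v s y = 0)
    (hu0 : ∀ y ∈ Ioo (-1:ℝ) 1, u 0 y = f y)
    (hv0 : ∀ y ∈ Ioo (-1:ℝ) 1, v 0 y = f y)
    (hu1 : ∀ y ∈ Ioo (-1:ℝ) 1, derivWithin (fun s => u s y) (Ici (0:ℝ)) 0 = g y)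
    (hv1 : ∀ y ∈ Ioo (-1:ℝ) 1, derivWithin (fun s => v s y) (Ici (0:ℝ)) 0 = g y) :
    ∀ s ∈ Ici (0:ℝ), ∀ y ∈ Ioo (-1:ℝ) 1, u s y = v s y :=
  stmt3_general f g u v hu hv hueq hveq hu0 hv0 hu1 hv1
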